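/- Fix α ∈ (1/3, 1/2), φ(s) := |s|^{α-1} for s < 0, and let h(x,t) := ∫_{-2}^{t} φ(s) · ( (2/√π) ∫₀^{x/(2√(t-s))} e^{-y²} dy ) ds for x ≥ 0, t ∈ (-2,0). Define u(x,t) := (h(x₃,t), 0, 0) and p(x,t) := -φ(t)·x₁ on B⁺ × (-1, 0), where B⁺ := B(0,1) ∩ {x ∈ ℝ³ : x₃ > 0}. Then ∫_{-1}^{0} ∫_{B⁺} ( |u(x,t)|² + |∇u(x,t)|² ) dx dt < ∞ and ∫_{-1}^{0} ∫_{B⁺} |p(x,t)|^{3/2} dx dt < ∞, where |∇u(x,t)| = |∂_x h(x₃,t)|. -/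

import Mathlib

open Set Filter MeasureTheory
open scoped ENNReal NNReal

noncomputable section

/-- ℝ³ as a Euclidean space. -/
abbrev E3 := EuclideanSpace ℝ (Fin 3)

/-- The error-function solution `Φ(x,t) = (2/√π) ∫₀^{x/(2√t)} e^{-y²} dy`. -/
def Phi (x t : ℝ) : ℝ :=
  (2 / Real.sqrt Real.pi) * ∫ y in (0 : ℝ)..(x / (2 * Real.sqrt t)), Real.exp (-y ^ 2)

/-- `h(x,t) = ∫_{-2}^t |s|^{α-1} Φ(x, t-s) ds`. -/
def heatSol (α x t : ℝ) : ℝ :=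
  ∫ s in (-2 : ℝ)..t, |s| ^ (α - 1) * Phi x (t - s)

/-- The half-ball `B⁺ = B(0,1) ∩ {x₃ > 0}`. -/
def BplusUnit : Set E3 := Metric.ball 0 1 ∩ {x : E3 | 0 < x 2}

/-- The half-cylinder `Q⁺ = B⁺ × (-1,0)`. -/
def QplusUnit : Set (E3 × ℝ) := BplusUnit ×ˢ (Ioo (-1 : ℝ) 0)

/-!
For `τ > 0`, `Φ(·, τ)` is `(πτ)^{-1/2}`-Lipschitz, so `h(·, t)` is Lipschitz with constant
`π^{-1/2} ∫_{-2}^t |s|^{α-1} (t-s)^{-1/2} ds`. Splitting this integral at `s = 2t` bounds it by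
`C |t|^{α-1/2}` for `t ∈ (-1, 0)`. As `h(0, t) = 0`, both `|h|` and `|∂ₓh|` are `≤ C |t|^{α-1/2}`
on `B⁺`, and `|t|^{2α-1}` is integrable since `α > 0`. The pressure obeys
`|p|^{3/2} ≤ |t|^{3(α-1)/2}`, which is integrable exactly because `α > 1/3`.
-/

open intervalIntegral

lemma Phi_zero_left (τ : ℝ) : Phi 0 τ = 0 := by
  simp [Phi]

lemma measurable_Phi (x : ℝ) : Measurable (Phi x) := by
  have hexp : Continuous fun y : ℝ => Real.exp (-y ^ 2) := by fun_prop
  have hprim : Continuous fun c : ℝ => ∫ y in (0 : ℝ)..c, Real.exp (-y ^ 2) :=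
    continuous_primitive (fun _ _ => hexp.intervalIntegrable _ _) 0
  exact (hprim.measurable.comp (by fun_prop)).const_mul _

-- At `τ = 0` both sides vanish, through `x / 0 = 0` and `0 ^ (-1/2) = 0`.
lemma abs_Phi_sub_le (x y : ℝ) {τ : ℝ} (hτ : 0 ≤ τ) :
    |Phi x τ - Phi y τ| ≤ |x - y| / Real.sqrt Real.pi * τ ^ (-(2⁻¹ : ℝ)) := by
  set c := 2 * Real.sqrt τ
  have hc : 0 ≤ c := by positivity
  have hgauss : ‖∫ z in y / c..x / c, Real.exp (-z ^ 2)‖ ≤ 1 * |x / c - y / c| := by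
    refine intervalIntegral.norm_integral_le_of_norm_le_const fun z _ => ?_
    rw [Real.norm_eq_abs, abs_of_pos (Real.exp_pos _), Real.exp_le_one_iff, neg_nonpos]
    positivity
  have hgauss_int (b : ℝ) : IntervalIntegrable (fun z => Real.exp (-z ^ 2)) volume 0 b :=
    Continuous.intervalIntegrable (by fun_prop) _ _
  have hsqrt : (Real.sqrt τ)⁻¹ = τ ^ (-(2⁻¹ : ℝ)) := by
    rw [Real.rpow_neg hτ, Real.sqrt_eq_rpow, one_div]
  calc |Phi x τ - Phi y τ|
      = 2 / Real.sqrt Real.pi * ‖∫ z in y / c..x / c, Real.exp (-z ^ 2)‖ := by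
        rw [Phi, Phi, ← mul_sub, integral_interval_sub_left (hgauss_int _) (hgauss_int _),
          abs_mul, abs_of_nonneg (by positivity), Real.norm_eq_abs]
    _ ≤ 2 / Real.sqrt Real.pi * (1 * |x / c - y / c|) := by gcongr
    _ = |x - y| / Real.sqrt Real.pi * τ ^ (-(2⁻¹ : ℝ)) := by
        rw [← hsqrt, ← sub_div, abs_div, abs_of_nonneg hc]
        ring

/-- `|s|^{α-1}` times `√π` times the Lipschitz constant of `Φ(·, t - s)`. -/
def lipKernel (α t s : ℝ) : ℝ := |s| ^ (α - 1) * (t - s) ^ (-(2⁻¹ : ℝ))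

lemma lipKernel_nonneg (α : ℝ) {t s : ℝ} (hs : s ≤ t) : 0 ≤ lipKernel α t s :=
  mul_nonneg (by positivity) (Real.rpow_nonneg (sub_nonneg.2 hs) _)

lemma intervalIntegrable_sub_rpow {r : ℝ} (hr : -1 < r) (t a b : ℝ) :
    IntervalIntegrable (fun s => (t - s) ^ r) volume a b := by
  simpa using (intervalIntegrable_rpow' hr (a := t - a) (b := t - b)).comp_sub_left t

lemma lipKernel_le_of_le {α t s : ℝ} (hα : α ≤ 1) (ht : t < 0) (hs : s ≤ t) :
    lipKernel α t s ≤ (-t) ^ (α - 1) * (t - s) ^ (-(2⁻¹ : ℝ)) := by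
  have habs : |s| = -s := abs_of_neg (by linarith)
  exact mul_le_mul_of_nonneg_right
    (Real.rpow_le_rpow_of_nonpos (by linarith) (by linarith) (by linarith))
    (Real.rpow_nonneg (by linarith) _)

lemma lipKernel_le_of_le_two_mul {α t s : ℝ} (ht : t < 0) (hs : s ≤ 2 * t) :
    lipKernel α t s ≤ Real.sqrt 2 * (-s) ^ (α - 2⁻¹ - 1) := by
  have hs0 : 0 < -s := by linarith
  have hhalf : (t - s) ^ (-(2⁻¹ : ℝ)) ≤ (-s / 2) ^ (-(2⁻¹ : ℝ)) :=
    Real.rpow_le_rpow_of_nonpos (by linarith) (by linarith) (by norm_num)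
  calc lipKernel α t s ≤ (-s) ^ (α - 1) * (-s / 2) ^ (-(2⁻¹ : ℝ)) := by
        rw [lipKernel, abs_of_neg (by linarith)]
        exact mul_le_mul_of_nonneg_left hhalf (by positivity)
    _ = Real.sqrt 2 * (-s) ^ (α - 2⁻¹ - 1) := by
        rw [Real.div_rpow hs0.le zero_le_two, Real.rpow_neg zero_le_two, div_inv_eq_mul,
          Real.sqrt_eq_rpow, show α - 2⁻¹ - 1 = α - 1 + -2⁻¹ by ring, Real.rpow_add hs0]
        norm_num
        ring

lemma intervalIntegrable_lipKernel {α t a b : ℝ} (hα : α ≤ 1) (ht : t < 0) (ha : a ≤ t)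
    (hb : b ≤ t) : IntervalIntegrable (lipKernel α t) volume a b := by
  suffices h : ∀ a ≤ t, IntervalIntegrable (lipKernel α t) volume a t from
    (h a ha).trans (h b hb).symm
  intro a ha
  rw [intervalIntegrable_iff_integrableOn_Ioo_of_le ha]
  have hdom : IntegrableOn (fun s => (-t) ^ (α - 1) * (t - s) ^ (-(2⁻¹ : ℝ))) (Ioo a t) := by
    rw [← intervalIntegrable_iff_integrableOn_Ioo_of_le ha]
    exact (intervalIntegrable_sub_rpow (by norm_num) t a t).const_mul _
  refine hdom.mono' (by unfold lipKernel; fun_prop) ?_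
  filter_upwards [ae_restrict_mem measurableSet_Ioo] with s ⟨_, hst⟩
  rw [Real.norm_of_nonneg (lipKernel_nonneg α hst.le)]
  exact lipKernel_le_of_le hα ht hst.le

lemma integral_lipKernel_near_le {α t : ℝ} (hα : α ≤ 1) (ht : t < 0) :
    ∫ s in (2 * t)..t, lipKernel α t s ≤ 2 * (-t) ^ (α - 2⁻¹) := by
  have ht0 : 0 < -t := by linarith
  calc ∫ s in (2 * t)..t, lipKernel α t s
      ≤ ∫ s in (2 * t)..t, (-t) ^ (α - 1) * (t - s) ^ (-(2⁻¹ : ℝ)) :=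
        integral_mono_on (by linarith) (intervalIntegrable_lipKernel hα ht (by linarith) le_rfl)
          ((intervalIntegrable_sub_rpow (by norm_num) t _ _).const_mul _)
          fun s hs => lipKernel_le_of_le hα ht hs.2
    _ = 2 * (-t) ^ (α - 2⁻¹) := by
        rw [intervalIntegral.integral_const_mul,
          integral_comp_sub_left (fun u => u ^ (-(2⁻¹ : ℝ))), sub_self,
          show t - 2 * t = -t by ring, integral_rpow (Or.inl (by norm_num)),
          Real.zero_rpow (by norm_num), sub_zero, show -(2⁻¹ : ℝ) + 1 = 2⁻¹ by norm_num,
          div_eq_mul_inv, inv_inv, show α - 2⁻¹ = α - 1 + 2⁻¹ by ring, Real.rpow_add ht0]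
        ring

lemma integral_lipKernel_far_le {α t : ℝ} (hα : α < 2⁻¹) (ht₁ : -1 ≤ t) (ht : t < 0) :
    ∫ s in (-2 : ℝ)..(2 * t), lipKernel α t s ≤
      Real.sqrt 2 * (-(2 * t)) ^ (α - 2⁻¹) / (2⁻¹ - α) := by
  have h0 : (0 : ℝ) ∉ uIcc (-(2 * t)) 2 := by
    rw [uIcc_of_le (by linarith)]
    exact fun h => by linarith [h.1]
  have hpow_int : IntervalIntegrable (fun s => (-s) ^ (α - 2⁻¹ - 1)) volume (-2) (2 * t) := by
    simpa using ((intervalIntegrable_rpow (Or.inr h0)).comp_sub_left 0).symm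
  calc ∫ s in (-2 : ℝ)..(2 * t), lipKernel α t s
      ≤ ∫ s in (-2 : ℝ)..(2 * t), Real.sqrt 2 * (-s) ^ (α - 2⁻¹ - 1) :=
        integral_mono_on (by linarith)
          (intervalIntegrable_lipKernel (by linarith) ht (by linarith) (by linarith))
          (hpow_int.const_mul _) fun s hs => lipKernel_le_of_le_two_mul ht hs.2
    _ = Real.sqrt 2 * (((-(2 * t)) ^ (α - 2⁻¹) - 2 ^ (α - 2⁻¹)) / (2⁻¹ - α)) := by
        rw [intervalIntegral.integral_const_mul,
          integral_comp_neg (fun u => u ^ (α - 2⁻¹ - 1)), neg_neg,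
          integral_rpow (Or.inr ⟨by linarith, h0⟩), sub_add_cancel, ← neg_sub α, div_neg,
          ← neg_div, neg_sub]
    _ ≤ Real.sqrt 2 * (-(2 * t)) ^ (α - 2⁻¹) / (2⁻¹ - α) := by
        rw [mul_div_assoc]
        gcongr
        exact sub_le_self _ (by positivity)

lemma exists_integral_lipKernel_le {α : ℝ} (hα : α < 2⁻¹) :
    ∃ C, ∀ t, -1 ≤ t → t < 0 → ∫ s in (-2 : ℝ)..t, lipKernel α t s ≤ C * (-t) ^ (α - 2⁻¹) := by
  refine ⟨Real.sqrt 2 * 2 ^ (α - 2⁻¹) / (2⁻¹ - α) + 2, fun t ht₁ ht => ?_⟩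
  have hα₁ : α ≤ 1 := by linarith
  rw [← integral_add_adjacent_intervals (b := 2 * t)
    (intervalIntegrable_lipKernel hα₁ ht (by linarith) (by linarith))
    (intervalIntegrable_lipKernel hα₁ ht (by linarith) le_rfl)]
  calc _ ≤ Real.sqrt 2 * (-(2 * t)) ^ (α - 2⁻¹) / (2⁻¹ - α) + 2 * (-t) ^ (α - 2⁻¹) :=
        add_le_add (integral_lipKernel_far_le hα ht₁ ht) (integral_lipKernel_near_le hα₁ ht)
    _ = _ := by
        rw [show -(2 * t) = 2 * -t by ring, Real.mul_rpow zero_le_two (by linarith)]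
        ring

lemma heatSol_zero_left (α t : ℝ) : heatSol α 0 t = 0 := by
  simp [heatSol, Phi_zero_left]

lemma abs_heatSol_integrand_sub_le (α x y : ℝ) {t s : ℝ} (hs : s ≤ t) :
    |(|s| ^ (α - 1) * Phi x (t - s)) - |s| ^ (α - 1) * Phi y (t - s)| ≤
      |x - y| / Real.sqrt Real.pi * lipKernel α t s := by
  rw [← mul_sub, abs_mul, abs_of_nonneg (by positivity), lipKernel, mul_left_comm]
  exact mul_le_mul_of_nonneg_left (abs_Phi_sub_le x y (sub_nonneg.2 hs)) (by positivity)

lemma intervalIntegrable_heatSol_integrand {α t a : ℝ} (hα : α ≤ 1) (ht : t < 0) (ha : a ≤ t)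
    (x : ℝ) : IntervalIntegrable (fun s => |s| ^ (α - 1) * Phi x (t - s)) volume a t := by
  have hPhi := measurable_Phi x
  rw [intervalIntegrable_iff_integrableOn_Icc_of_le ha]
  have hdom :=
    (intervalIntegrable_lipKernel hα ht ha le_rfl).const_mul (|x| / Real.sqrt Real.pi)
  rw [intervalIntegrable_iff_integrableOn_Icc_of_le ha] at hdom
  refine hdom.mono' (by fun_prop) ?_
  filter_upwards [ae_restrict_mem measurableSet_Icc] with s hs
  simpa [Phi_zero_left] using abs_heatSol_integrand_sub_le α x 0 hs.2

lemma abs_heatSol_sub_le {α t : ℝ} (hα : α ≤ 1) (ht₂ : -2 ≤ t) (ht : t < 0) (x y : ℝ) :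
    |heatSol α x t - heatSol α y t| ≤
      (∫ s in (-2 : ℝ)..t, lipKernel α t s) / Real.sqrt Real.pi * |x - y| := by
  rw [heatSol, heatSol, ← integral_sub (intervalIntegrable_heatSol_integrand hα ht ht₂ x)
    (intervalIntegrable_heatSol_integrand hα ht ht₂ y), ← Real.norm_eq_abs]
  calc _ ≤ ∫ s in (-2 : ℝ)..t, |x - y| / Real.sqrt Real.pi * lipKernel α t s :=
        norm_integral_le_of_norm_le ht₂
          (ae_of_all _ fun s hs => abs_heatSol_integrand_sub_le α x y hs.2)
          ((intervalIntegrable_lipKernel hα ht ht₂ le_rfl).const_mul _)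
    _ = _ := by rw [intervalIntegral.integral_const_mul]; ring

lemma exists_heatSol_sq_add_deriv_sq_le {α : ℝ} (hα : α < 2⁻¹) :
    ∃ C, ∀ x t, |x| ≤ 1 → -1 ≤ t → t < 0 →
      heatSol α x t ^ 2 + deriv (fun y => heatSol α y t) x ^ 2 ≤ C * (-t) ^ (2 * α - 1) := by
  obtain ⟨C, hC⟩ := exists_integral_lipKernel_le hα
  refine ⟨2 * (C / Real.sqrt Real.pi) ^ 2, fun x t hx ht₁ ht => ?_⟩
  have hα₁ : α ≤ 1 := by linarith
  set L := (∫ s in (-2 : ℝ)..t, lipKernel α t s) / Real.sqrt Real.pi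
  have hL₀ : 0 ≤ L :=
    div_nonneg (integral_nonneg (by linarith) fun s hs => lipKernel_nonneg α hs.2) (by positivity)
  have hLC : L ≤ C / Real.sqrt Real.pi * (-t) ^ (α - 2⁻¹) := by
    rw [div_mul_eq_mul_div]
    exact div_le_div_of_nonneg_right (hC t ht₁ ht) (by positivity)
  have hLip := abs_heatSol_sub_le hα₁ (by linarith) ht
  have hval : |heatSol α x t| ≤ L := by
    simpa [heatSol_zero_left] using (hLip x 0).trans (mul_le_of_le_one_right hL₀ (by simpa))
  have hderiv : |deriv (fun y => heatSol α y t) x| ≤ L := by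
    have hlip : LipschitzWith L.toNNReal (fun y => heatSol α y t) :=
      .of_dist_le_mul fun a b => by simpa [Real.dist_eq, hL₀] using hLip a b
    simpa [hL₀] using norm_deriv_le_of_lipschitz (x₀ := x) hlip
  calc _ ≤ L ^ 2 + L ^ 2 := add_le_add (sq_le_sq.2 (hval.trans (le_abs_self L)))
        (sq_le_sq.2 (hderiv.trans (le_abs_self L)))
    _ ≤ 2 * (C / Real.sqrt Real.pi * (-t) ^ (α - 2⁻¹)) ^ 2 := by nlinarith
    _ = _ := by
        rw [mul_pow, ← Real.rpow_mul_natCast (by linarith)]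
        push_cast
        ring_nf

lemma integrableOn_Ioo_neg_rpow {r T : ℝ} (hr : -1 < r) (hT : 0 ≤ T) :
    IntegrableOn (fun τ : ℝ => (-τ) ^ r) (Ioo (-T) 0) := by
  rw [← intervalIntegrable_iff_integrableOn_Ioo_of_le (by linarith)]
  have h : IntervalIntegrable (fun τ : ℝ => τ ^ r) volume 0 T := intervalIntegrable_rpow' hr
  simpa using (h.comp_sub_left 0).symm

lemma setLIntegral_prod_lt_top_of_le {X Y : Type*} [MeasurableSpace X] [MeasurableSpace Y]
    {μ : Measure X} {ν : Measure Y} [SFinite μ] [SFinite ν] {s : Set X} {T : Set Y}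
    (hμs : μ s ≠ ∞) (hsT : MeasurableSet (s ×ˢ T)) {F : X × Y → ℝ} {G : Y → ℝ}
    (hG : IntegrableOn G T ν) (hFG : ∀ z ∈ s ×ˢ T, F z ≤ G z.2) :
    ∫⁻ z in s ×ˢ T, ENNReal.ofReal (F z) ∂μ.prod ν < ∞ := by
  calc ∫⁻ z in s ×ˢ T, ENNReal.ofReal (F z) ∂μ.prod ν
      ≤ ∫⁻ z in s ×ˢ T, ENNReal.ofReal (G z.2) ∂μ.prod ν :=
        setLIntegral_mono' hsT fun z hz => ENNReal.ofReal_le_ofReal (hFG z hz)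
    _ = μ s * ∫⁻ τ in T, ENNReal.ofReal (G τ) ∂ν := by
        rw [← Measure.prod_restrict]
        simpa using lintegral_prod_mul (μ := μ.restrict s) (f := fun _ => 1) aemeasurable_const
          hG.aemeasurable.ennreal_ofReal
    _ < ∞ := ENNReal.mul_lt_top hμs.lt_top hG.lintegral_lt_top

lemma abs_apply_le_one_of_mem_BplusUnit {x : E3} (hx : x ∈ BplusUnit) (i : Fin 3) : |x i| ≤ 1 :=
  (PiLp.norm_apply_le x i).trans (mem_ball_zero_iff.1 hx.1).le

lemma lintegral_QplusUnit_lt_top_of_le {F : E3 × ℝ → ℝ} {G : ℝ → ℝ}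
    (hG : IntegrableOn G (Ioo (-1) 0)) (hFG : ∀ z ∈ QplusUnit, F z ≤ G z.2) :
    ∫⁻ z in QplusUnit, ENNReal.ofReal (F z) < ∞ := by
  have hB : MeasurableSet BplusUnit :=
    measurableSet_ball.inter (measurableSet_lt measurable_const (by fun_prop))
  rw [Measure.volume_eq_prod]
  exact setLIntegral_prod_lt_top_of_le (measure_mono inter_subset_left |>.trans_lt
    measure_ball_lt_top).ne (hB.prod measurableSet_Ioo) hG hFG

/-- The counterexample shear flow `u(x,t) = (h(x₃,t),0,0)`, `p(x,t) = -|t|^{α-1} x₁`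
with `α ∈ (1/3, 1/2)` lies in the energy class: `∫_{Q⁺} (|u|² + |∇u|²) < ∞` (where
`|∇u(x,t)| = |∂ₓ h(x₃,t)|`) and `∫_{Q⁺} |p|^{3/2} < ∞`. -/
theorem counterexample_in_energy_class (α : ℝ) (hα : α ∈ Ioo (1 / 3 : ℝ) (1 / 2))
    (u : E3 × ℝ → E3) (p : E3 × ℝ → ℝ)
    (hu : ∀ z : E3 × ℝ, u z = heatSol α (z.1 2) z.2 • (EuclideanSpace.single 0 1 : E3))
    (hp : ∀ z : E3 × ℝ, p z = -(|z.2| ^ (α - 1)) * z.1 0) :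
    (∫⁻ z in QplusUnit,
        ENNReal.ofReal (‖u z‖ ^ 2 + (deriv (fun y => heatSol α y z.2) (z.1 2)) ^ 2)) < ⊤ ∧
    (∫⁻ z in QplusUnit, ENNReal.ofReal (|p z| ^ (3 / 2 : ℝ))) < ⊤ := by
  obtain ⟨hα₁, hα₂⟩ := hα
  obtain ⟨C, hC⟩ := exists_heatSol_sq_add_deriv_sq_le (α := α) (by linarith)
  constructor
  · refine lintegral_QplusUnit_lt_top_of_le
      ((integrableOn_Ioo_neg_rpow (r := 2 * α - 1) (by linarith) zero_le_one).const_mul C) ?_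
    rintro ⟨x, t⟩ ⟨hx, ht⟩
    rw [hu, norm_smul, PiLp.norm_single, norm_one, mul_one, Real.norm_eq_abs, sq_abs]
    exact hC _ _ (abs_apply_le_one_of_mem_BplusUnit hx 2) ht.1.le ht.2
  · refine lintegral_QplusUnit_lt_top_of_le
      (integrableOn_Ioo_neg_rpow (r := (α - 1) * (3 / 2)) (by linarith) zero_le_one) ?_
    rintro ⟨x, t⟩ ⟨hx, ht⟩
    have hp_le : |p (x, t)| ≤ (-t) ^ (α - 1) := by
      rw [hp, abs_mul, abs_neg, abs_of_nonneg (by positivity), ← abs_of_neg ht.2]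
      exact mul_le_of_le_one_right (by positivity) (abs_apply_le_one_of_mem_BplusUnit hx 0)
    calc |p (x, t)| ^ (3 / 2 : ℝ) ≤ ((-t) ^ (α - 1)) ^ (3 / 2 : ℝ) := by gcongr
      _ = (-t) ^ ((α - 1) * (3 / 2)) := (Real.rpow_mul (by linarith [ht.2]) _ _).symm
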